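/- For every natural number n ≥ 1, Σ_{k=1}^{n} 1/k² = ζ(2) - 1/n + Σ_{k=1}^{∞} (1/(k+1)) · (k-1)! / (n(n+1)(n+2)⋯(n+k)), where the infinite series converges. -/

import Mathlib

open Finset Real Filter

/-- Unsigned Stirling numbers of the first kind. -/
def stirling1 : ℕ → ℕ → ℕ
  | 0, 0 => 1
  | 0, _ + 1 => 0
  | _ + 1, 0 => 0
  | n + 1, k + 1 => n * stirling1 n (k + 1) + stirling1 n k

/-- Signed Stirling numbers of the first kind, as reals. -/
noncomputable def s1 (k l : ℕ) : ℝ := (-1 : ℝ) ^ (k - l) * stirling1 k l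

/-- Bernoulli number (with `B 1 = -1/2`) as a real. -/
noncomputable def B (m : ℕ) : ℝ := ((bernoulli m : ℚ) : ℝ)

/-- Rising factorial (Pochhammer symbol) `(x)_k = x(x+1)⋯(x+k-1)`. -/
noncomputable def rf (x : ℝ) (k : ℕ) : ℝ := ∏ i ∈ Finset.range k, (x + i)

/-!
Let `T x k = k! / ((k + 2) (x)_{k+2})` (`zeta2Term`) and `V x k = k! / ((x + 1) (x)_{k+2})`
(`zeta2Telescoper`). Both `T x k - T (x + 1) k` and `V x k - V x (k + 1)` equal `k! / (x)_{k+3}`,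
so summing over `k` telescopes to `∑ₖ T x k - ∑ₖ T (x + 1) k = V x 0 = 1 / (x (x + 1)²)`. Since
`1 / n - 1 / (n + 1) - 1 / (n (n + 1)²) = 1 / (n + 1)²`, the right-hand side grows with `n`
exactly like the partial sums of `ζ(2)`, and at `n = 1` the partial fractions
`T 1 k = 1 / (k + 1) - 1 / (k + 2) - 1 / (k + 2)²` give `∑ₖ T 1 k = 2 - ζ(2)`.
-/

open scoped Topology Nat

section Telescoping

variable {G : Type*} [AddCommGroup G] [TopologicalSpace G] [IsTopologicalAddGroup G] [T2Space G]

theorem hasSum_sub_succ_of_tendsto {f : ℕ → G} {l : G}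
    (hs : Summable fun k => f k - f (k + 1)) (hf : Tendsto f atTop (𝓝 l)) :
    HasSum (fun k => f k - f (k + 1)) (f 0 - l) := by
  rw [hs.hasSum_iff_tendsto_nat]
  simp_rw [Finset.sum_range_sub']
  exact tendsto_const_nhds.sub hf

end Telescoping

section RisingFactorial

variable (x : ℝ) (k : ℕ)

theorem rf_succ : rf x (k + 1) = rf x k * (x + k) :=
  prod_range_succ _ k

theorem rf_succ' : rf x (k + 1) = x * rf (x + 1) k := by
  simp only [rf, prod_range_succ', Nat.cast_zero, add_zero, Nat.cast_succ, add_assoc,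
    add_comm (1 : ℝ)]
  ring

variable {x}

theorem rf_pos (hx : 0 < x) : 0 < rf x k :=
  prod_pos fun i _ => by positivity

theorem factorial_le_rf (hx : 1 ≤ x) : (k ! : ℝ) ≤ rf x k := by
  rw [← prod_range_add_one_eq_factorial, Nat.cast_prod]
  exact prod_le_prod (fun i _ => by positivity) fun i _ => by push_cast; linarith

theorem factorial_div_rf_le (hx : 1 ≤ x) : (k ! : ℝ) / rf x (k + 2) ≤ 1 / ((k : ℝ) + 1) ^ 2 := by
  have hk : (0 : ℝ) < k ! := by positivity
  have hfac : ((k + 2) ! : ℝ) = ((k : ℝ) + 2) * ((k : ℝ) + 1) * k ! := by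
    push_cast [Nat.factorial_succ]; ring
  rw [div_le_div_iff₀ (rf_pos _ (by linarith)) (by positivity)]
  calc (k ! : ℝ) * ((k : ℝ) + 1) ^ 2 ≤ ((k + 2) ! : ℝ) := by rw [hfac]; nlinarith
    _ ≤ 1 * rf x (k + 2) := by rw [one_mul]; exact factorial_le_rf _ hx

end RisingFactorial

noncomputable def zeta2Term (x : ℝ) (k : ℕ) : ℝ := 1 / ((k : ℝ) + 2) * (k ! : ℝ) / rf x (k + 2)

noncomputable def zeta2Telescoper (x : ℝ) (k : ℕ) : ℝ := (k ! : ℝ) / ((x + 1) * rf x (k + 2))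

section Zeta2Term

variable {x : ℝ}

theorem zeta2Term_sub_succ (hx : 0 < x) (k : ℕ) :
    zeta2Term x k - zeta2Term (x + 1) k = (k ! : ℝ) / rf x (k + 3) := by
  have hR := rf_pos (k + 2) hx
  have hshift : rf (x + 1) (k + 2) = rf x (k + 2) * (x + (k + 2)) / x := by
    rw [eq_div_iff hx.ne', mul_comm, ← rf_succ', rf_succ]
    push_cast; ring
  rw [zeta2Term, zeta2Term, hshift, rf_succ x (k + 2)]
  push_cast
  field_simp
  ring

theorem zeta2Telescoper_sub_succ (hx : 0 < x) (k : ℕ) :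
    zeta2Telescoper x k - zeta2Telescoper x (k + 1) = (k ! : ℝ) / rf x (k + 3) := by
  have hR := rf_pos (k + 2) hx
  rw [zeta2Telescoper, zeta2Telescoper, rf_succ x (k + 2), Nat.factorial_succ]
  push_cast
  field_simp
  ring

theorem zeta2Telescoper_zero (hx : 0 < x) : zeta2Telescoper x 0 = 1 / (x * (x + 1) ^ 2) := by
  simp only [zeta2Telescoper, rf, prod_range_succ, prod_range_zero]
  field_simp
  ring

theorem zeta2Term_nonneg (hx : 0 < x) (k : ℕ) : 0 ≤ zeta2Term x k := by
  have := rf_pos (k + 2) hx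
  unfold zeta2Term
  positivity

theorem zeta2Term_le (hx : 1 ≤ x) (k : ℕ) : zeta2Term x k ≤ 1 / ((k : ℝ) + 1) ^ 2 := by
  refine le_trans ?_ (factorial_div_rf_le k hx)
  rw [zeta2Term, mul_div_assoc]
  have := rf_pos (k + 2) (by linarith : 0 < x)
  exact mul_le_of_le_one_left (by positivity) (by rw [div_le_one (by positivity)]; linarith)

theorem summable_one_div_add_one_sq : Summable fun k : ℕ => 1 / ((k : ℝ) + 1) ^ 2 := by
  simpa using (summable_nat_add_iff 1).2 (Real.summable_one_div_nat_pow.2 one_lt_two)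

theorem summable_zeta2Term (hx : 1 ≤ x) : Summable (zeta2Term x) :=
  summable_one_div_add_one_sq.of_nonneg_of_le (zeta2Term_nonneg (by linarith)) (zeta2Term_le hx)

theorem tendsto_zeta2Telescoper (hx : 1 ≤ x) : Tendsto (zeta2Telescoper x) atTop (𝓝 0) := by
  have hx0 : 0 < x := by linarith
  refine Summable.tendsto_atTop_zero (summable_one_div_add_one_sq.of_nonneg_of_le
    (fun k => ?_) fun k => le_trans ?_ (factorial_div_rf_le k hx))
  · have := rf_pos (k + 2) hx0
    unfold zeta2Telescoper
    positivity
  · have := rf_pos (k + 2) hx0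
    exact div_le_div_of_nonneg_left (by positivity) this
      (le_mul_of_one_le_left this.le (by linarith))

theorem tsum_zeta2Term_add_one (hx : 1 ≤ x) :
    ∑' k, zeta2Term (x + 1) k = ∑' k, zeta2Term x k - 1 / (x * (x + 1) ^ 2) := by
  have hx0 : 0 < x := by linarith
  have hsplit (k : ℕ) : zeta2Term x k - zeta2Term (x + 1) k =
      zeta2Telescoper x k - zeta2Telescoper x (k + 1) :=
    (zeta2Term_sub_succ hx0 k).trans (zeta2Telescoper_sub_succ hx0 k).symm
  have hT := summable_zeta2Term hx
  have hT' := summable_zeta2Term (x := x + 1) (by linarith)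
  have hV := hasSum_sub_succ_of_tendsto ((hT.sub hT').congr hsplit) (tendsto_zeta2Telescoper hx)
  rw [zeta2Telescoper_zero hx0, sub_zero] at hV
  rw [← (hV.congr_fun hsplit).tsum_eq, hT.tsum_sub hT']
  ring

theorem zeta2Term_one (k : ℕ) :
    zeta2Term 1 k = 1 / ((k : ℝ) + 1) - 1 / ((k : ℝ) + 2) - 1 / ((k : ℝ) + 2) ^ 2 := by
  have hrf : rf 1 (k + 2) = ((k + 2) ! : ℝ) := by
    rw [← prod_range_add_one_eq_factorial, Nat.cast_prod, rf]
    exact prod_congr rfl fun i _ => by push_cast; ring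
  rw [zeta2Term, hrf, Nat.factorial_succ, Nat.factorial_succ]
  push_cast
  field_simp
  ring

theorem tsum_zeta2Term_one :
    ∑' k, zeta2Term 1 k = 2 - ∑' k : ℕ, 1 / ((k : ℝ) + 1) ^ 2 := by
  have hs2 : Summable fun k : ℕ => 1 / ((k : ℝ) + 2) ^ 2 := by
    simpa [add_assoc, one_add_one_eq_two] using
      (summable_nat_add_iff 1).2 summable_one_div_add_one_sq
  have hzeta : ∑' k : ℕ, 1 / ((k : ℝ) + 1) ^ 2 = 1 + ∑' k : ℕ, 1 / ((k : ℝ) + 2) ^ 2 := by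
    rw [summable_one_div_add_one_sq.tsum_eq_zero_add]
    norm_num [add_assoc, one_add_one_eq_two]
  have hsplit (k : ℕ) : zeta2Term 1 k + 1 / ((k : ℝ) + 2) ^ 2 =
      1 / ((k : ℝ) + 1) - 1 / (((k + 1 : ℕ) : ℝ) + 1) := by
    rw [zeta2Term_one]; push_cast; ring
  have htel := hasSum_sub_succ_of_tendsto (((summable_zeta2Term le_rfl).add hs2).congr hsplit)
    tendsto_one_div_add_atTop_nhds_zero_nat
  have := (htel.congr_fun hsplit).tsum_eq
  rw [(summable_zeta2Term le_rfl).tsum_add hs2, Nat.cast_zero, zero_add, div_one, sub_zero] at this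
  linarith

end Zeta2Term

theorem sum_Icc_one_div_sq_eq (n : ℕ) (hn : 1 ≤ n) :
    ∑ k ∈ Icc 1 n, (1 : ℝ) / (k : ℝ) ^ 2 =
      ∑' k : ℕ, 1 / ((k : ℝ) + 1) ^ 2 - 1 / (n : ℝ) + ∑' k, zeta2Term n k := by
  induction n, hn using Nat.le_induction with
  | base => rw [Nat.cast_one, tsum_zeta2Term_one]; norm_num
  | succ n hn ih =>
    have hn' : (1 : ℝ) ≤ n := by exact_mod_cast hn
    rw [sum_Icc_succ_top (by omega), ih, Nat.cast_succ, tsum_zeta2Term_add_one hn']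
    field_simp
    ring

/-- Inverse factorial series for the partial sums of `ζ(2)`. -/
theorem partial_zeta_two_stirling_series (n : ℕ) (hn : 1 ≤ n) :
    Summable (fun k : ℕ => (1 / ((k : ℝ) + 2)) * (Nat.factorial k : ℝ) /
        ∏ i ∈ Finset.range (k + 2), ((n : ℝ) + i)) ∧
      ∑ k ∈ Finset.Icc 1 n, (1 : ℝ) / (k : ℝ) ^ 2 =
        (∑' k : ℕ, (1 : ℝ) / ((k : ℝ) + 1) ^ 2) - 1 / (n : ℝ) +
          ∑' k : ℕ, (1 / ((k : ℝ) + 2)) * (Nat.factorial k : ℝ) /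
            ∏ i ∈ Finset.range (k + 2), ((n : ℝ) + i) :=
  ⟨summable_zeta2Term (by exact_mod_cast hn), sum_Icc_one_div_sq_eq n hn⟩
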